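/- For every positive integer k, let G_k be the graph with vertex set {x_1, …, x_{k+1}} ∪ A_1 ∪ … ∪ A_k, where the sets A_i are pairwise disjoint five-element sets disjoint from {x_1, …, x_{k+1}}, and where the edges are exactly the pairs joining each vertex of A_i to x_i and to x_{i+1}, for 1 ≤ i ≤ k (so each A_i is an independent set and the vertices x_1, …, x_{k+1} are pairwise nonadjacent). Then G_k is a connected graph on n = 6k+1 vertices that has at least 5^k = 5^((n−1)/6) minimal connected vertex covers. -/
import Mathlib


/-- `U` is a vertex cover of `G`: every edge has at least one endpoint in `U`. -/
def IsVertexCover {V : Type*} (G : SimpleGraph V) (U : Set V) : Prop :=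
  ∀ ⦃a b : V⦄, G.Adj a b → a ∈ U ∨ b ∈ U

/-- `U` is a connected vertex cover of `G`. -/
def IsCVC {V : Type*} (G : SimpleGraph V) (U : Set V) : Prop :=
  IsVertexCover G U ∧ (G.induce U).Connected

/-- `U` is a minimal connected vertex cover of `G`. -/
def IsMinCVC {V : Type*} (G : SimpleGraph V) (U : Set V) : Prop :=
  IsCVC G U ∧ ∀ W : Set V, W ⊂ U → ¬ IsCVC G W

/-- The graph `G_k`: vertices `x_1, …, x_{k+1}` (the `Sum.inl` vertices) and pairwise
disjoint five-element sets `A_1, …, A_k` (with `A_i` the vertices `Sum.inr (i, m)`);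
each vertex of `A_i` is adjacent exactly to `x_i` and `x_{i+1}`. -/
def paperGraph (k : ℕ) : SimpleGraph (Fin (k + 1) ⊕ (Fin k × Fin 5)) :=
  SimpleGraph.fromRel (fun a b =>
    ∃ (i : Fin k) (m : Fin 5), a = Sum.inr (i, m) ∧
      (b = Sum.inl i.castSucc ∨ b = Sum.inl i.succ))

abbrev PV (k : ℕ) := Fin (k + 1) ⊕ (Fin k × Fin 5)

lemma paperGraph_adj {k : ℕ} {a b : PV k} :
    (paperGraph k).Adj a b ↔
      (∃ i m, a = Sum.inr (i, m) ∧ (b = Sum.inl i.castSucc ∨ b = Sum.inl i.succ)) ∨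
      (∃ i m, b = Sum.inr (i, m) ∧ (a = Sum.inl i.castSucc ∨ a = Sum.inl i.succ)) := by
  rw [paperGraph, SimpleGraph.fromRel_adj]
  constructor
  · rintro ⟨-, h⟩; exact h
  · rintro (⟨i, m, rfl, h⟩ | ⟨i, m, rfl, h⟩) <;>
      [exact ⟨by rcases h with rfl | rfl <;> simp, Or.inl ⟨i, m, rfl, h⟩⟩;
       exact ⟨by rcases h with rfl | rfl <;> simp, Or.inr ⟨i, m, rfl, h⟩⟩]

lemma adj_castSucc {k : ℕ} (i : Fin k) (m : Fin 5) :
    (paperGraph k).Adj (Sum.inr (i, m)) (Sum.inl i.castSucc) :=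
  paperGraph_adj.mpr (Or.inl ⟨i, m, rfl, Or.inl rfl⟩)

lemma adj_succ {k : ℕ} (i : Fin k) (m : Fin 5) :
    (paperGraph k).Adj (Sum.inr (i, m)) (Sum.inl i.succ) :=
  paperGraph_adj.mpr (Or.inl ⟨i, m, rfl, Or.inr rfl⟩)

lemma reachable_iff_of_invariant {α : Type*} {G : SimpleGraph α} (φ : α → Prop)
    (h : ∀ a b, G.Adj a b → (φ a ↔ φ b)) {u v : α} (hr : G.Reachable u v) :
    φ u ↔ φ v := by
  obtain ⟨w⟩ := hr
  induction w with
  | nil => rfl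
  | cons ha _ ih => exact (h _ _ ha).trans ih

def cov (k : ℕ) (f : Fin k → Fin 5) : Set (PV k) :=
  {v | ∀ i m, v = Sum.inr (i, m) → m = f i}

lemma inl_mem_cov {k : ℕ} (f : Fin k → Fin 5) (j : Fin (k + 1)) :
    Sum.inl j ∈ cov k f := by
  intro i m h; simp at h

lemma inr_mem_cov {k : ℕ} (f : Fin k → Fin 5) {i : Fin k} {m : Fin 5} :
    Sum.inr (i, m) ∈ cov k f ↔ m = f i := by
  constructor
  · exact fun h => h i m rfl
  · rintro rfl i' m' h
    obtain ⟨rfl, rfl⟩ : i' = i ∧ m' = f i := by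
      have := h.symm; simp only [Sum.inr.injEq, Prod.mk.injEq] at this; tauto
    rfl

lemma cov_reach {k : ℕ} (f : Fin k → Fin 5) :
    ∀ (n : ℕ) (hn : n < k + 1),
      ((paperGraph k).induce (cov k f)).Reachable
        ⟨Sum.inl 0, inl_mem_cov f 0⟩ ⟨Sum.inl ⟨n, hn⟩, inl_mem_cov f _⟩ := by
  intro n
  induction n with
  | zero => intro hn; exact SimpleGraph.Reachable.refl _
  | succ n ih =>
    intro hn
    have hn' : n < k := by omega
    set i : Fin k := ⟨n, hn'⟩ with hi
    have hmem : Sum.inr (i, f i) ∈ cov k f := (inr_mem_cov f).mpr rfl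
    have h1 : ((paperGraph k).induce (cov k f)).Adj
        ⟨Sum.inr (i, f i), hmem⟩ ⟨Sum.inl ⟨n, by omega⟩, inl_mem_cov f _⟩ := by
      show (paperGraph k).Adj _ _
      have : (⟨n, by omega⟩ : Fin (k+1)) = i.castSucc := rfl
      rw [this]; exact adj_castSucc i (f i)
    have h2 : ((paperGraph k).induce (cov k f)).Adj
        ⟨Sum.inr (i, f i), hmem⟩ ⟨Sum.inl ⟨n + 1, hn⟩, inl_mem_cov f _⟩ := by
      show (paperGraph k).Adj _ _
      have : (⟨n + 1, hn⟩ : Fin (k+1)) = i.succ := rfl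
      rw [this]; exact adj_succ i (f i)
    exact ((ih (by omega)).trans h1.symm.reachable).trans h2.reachable

lemma cov_connected {k : ℕ} (f : Fin k → Fin 5) :
    ((paperGraph k).induce (cov k f)).Connected := by
  rw [SimpleGraph.connected_iff]
  refine ⟨fun u v => ?_, ⟨⟨Sum.inl 0, inl_mem_cov f 0⟩⟩⟩
  have key : ∀ w : cov k f,
      ((paperGraph k).induce (cov k f)).Reachable ⟨Sum.inl 0, inl_mem_cov f 0⟩ w := by
    rintro ⟨(j | ⟨i, m⟩), hw⟩
    · have : (⟨Sum.inl j, hw⟩ : cov k f) = ⟨Sum.inl ⟨j.val, j.isLt⟩, inl_mem_cov f _⟩ := rfl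
      rw [this]; exact cov_reach f j.val j.isLt
    · have hm : m = f i := (inr_mem_cov f).mp hw
      subst hm
      have h1 : ((paperGraph k).induce (cov k f)).Adj
          ⟨Sum.inr (i, f i), hw⟩ ⟨Sum.inl ⟨i.val, by omega⟩, inl_mem_cov f _⟩ := by
        show (paperGraph k).Adj _ _
        have : (⟨i.val, by omega⟩ : Fin (k+1)) = i.castSucc := rfl
        rw [this]; exact adj_castSucc i (f i)
      exact (cov_reach f i.val (by omega)).trans h1.symm.reachable
  exact (key u).symm.trans (key v)

lemma paperGraph_reach {k : ℕ} :
    ∀ (n : ℕ) (hn : n < k + 1),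
      (paperGraph k).Reachable (Sum.inl 0) (Sum.inl ⟨n, hn⟩) := by
  intro n
  induction n with
  | zero => intro hn; exact SimpleGraph.Reachable.refl _
  | succ n ih =>
    intro hn
    have hn' : n < k := by omega
    set i : Fin k := ⟨n, hn'⟩ with hi
    have h1 : (paperGraph k).Adj (Sum.inr (i, 0)) (Sum.inl ⟨n, by omega⟩) :=
      adj_castSucc i 0
    have h2 : (paperGraph k).Adj (Sum.inr (i, 0)) (Sum.inl ⟨n + 1, hn⟩) :=
      adj_succ i 0
    exact ((ih (by omega)).trans h1.symm.reachable).trans h2.reachable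

lemma paperGraph_connected (k : ℕ) : (paperGraph k).Connected := by
  rw [SimpleGraph.connected_iff]
  refine ⟨fun u v => ?_, ⟨Sum.inl 0⟩⟩
  have key : ∀ w : PV k, (paperGraph k).Reachable (Sum.inl 0) w := by
    rintro (j | ⟨i, m⟩)
    · have : j = ⟨j.val, j.isLt⟩ := rfl
      rw [this]; exact paperGraph_reach j.val j.isLt
    · have h1 : (paperGraph k).Adj (Sum.inr (i, m)) (Sum.inl ⟨i.val, by omega⟩) :=
        adj_castSucc i m
      exact (paperGraph_reach i.val (by omega)).trans h1.symm.reachable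
  exact (key u).symm.trans (key v)

lemma cov_minCVC {k : ℕ} (hk : 0 < k) (f : Fin k → Fin 5) :
    IsMinCVC (paperGraph k) (cov k f) := by
  constructor
  · refine ⟨fun a b hab => ?_, cov_connected f⟩
    rcases paperGraph_adj.mp hab with ⟨i, m, rfl, (rfl | rfl)⟩ | ⟨i, m, rfl, (rfl | rfl)⟩ <;>
      first
        | exact Or.inr (inl_mem_cov f _)
        | exact Or.inl (inl_mem_cov f _)
  · rintro W ⟨hWsub, hWne⟩ ⟨hWcov, hWconn⟩
    by_cases hx : ∀ j : Fin (k + 1), Sum.inl j ∈ W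
    · -- W contains all inl, misses some inr (i, f i); disconnected
      obtain ⟨u, huU, huW⟩ := Set.exists_of_ssubset ⟨hWsub, hWne⟩
      obtain (j | ⟨i, m⟩) := u
      · exact huW (hx j)
      · have hm : m = f i := (inr_mem_cov f).mp huU
        subst hm
        have hreach := hWconn.preconnected ⟨Sum.inl i.castSucc, hx _⟩ ⟨Sum.inl i.succ, hx _⟩
        have hinv := reachable_iff_of_invariant
          (G := (paperGraph k).induce W)
          (fun v => match v.val with
            | Sum.inl j => j.val ≤ i.val
            | Sum.inr (i', _) => i'.val < i.val) ?_ hreach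
        · simp only [Fin.coe_castSucc, Fin.val_succ] at hinv
          omega
        · rintro ⟨a, ha⟩ ⟨b, hb⟩ hab
          have hab' : (paperGraph k).Adj a b := hab
          have key : ∀ (i' : Fin k) (m' : Fin 5), Sum.inr (i', m') ∈ W → i'.val ≠ i.val := by
            intro i' m' hmem hvi
            have hi' : i' = i := Fin.ext hvi
            subst hi'
            have : m' = f i' := (inr_mem_cov f).mp (hWsub hmem)
            subst this
            exact huW hmem
          rcases paperGraph_adj.mp hab' with ⟨i', m', rfl, (rfl | rfl)⟩ | ⟨i', m', rfl, (rfl | rfl)⟩ <;>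
            simp only [Fin.coe_castSucc, Fin.val_succ] <;>
            [ (have := key i' m' ha; omega);
              (have := key i' m' ha; omega);
              (have := key i' m' hb; omega);
              (have := key i' m' hb; omega) ]
    · -- some inl j missing from W: W is not a vertex cover
      push_neg at hx
      obtain ⟨j, hj⟩ := hx
      obtain ⟨i, hij⟩ : ∃ i : Fin k, j = i.castSucc ∨ j = i.succ := by
        by_cases h : j.val < k
        · exact ⟨⟨j.val, h⟩, Or.inl (Fin.ext rfl)⟩
        · refine ⟨⟨k - 1, by omega⟩, Or.inr (Fin.ext ?_)⟩
          have : j.val = k := by omega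
          simp [this]; omega
      obtain ⟨m, hm⟩ := exists_ne (f i)
      have hmemU : Sum.inr (i, m) ∉ cov k f := fun h => hm ((inr_mem_cov f).mp h)
      have hmemW : Sum.inr (i, m) ∉ W := fun h => hmemU (hWsub h)
      have hadj : (paperGraph k).Adj (Sum.inr (i, m)) (Sum.inl j) := by
        rcases hij with rfl | rfl
        · exact adj_castSucc i m
        · exact adj_succ i m
      rcases hWcov hadj with h | h
      · exact hmemW h
      · exact hj h

lemma cov_injective {k : ℕ} : Function.Injective (cov k) := by
  intro f g h
  funext i
  have h1 : Sum.inr (i, f i) ∈ cov k f := (inr_mem_cov f).mpr rfl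
  rw [h] at h1
  exact (inr_mem_cov g).mp h1

theorem stmt19 (k : ℕ) (hk : 0 < k) :
    (paperGraph k).Connected ∧
    Fintype.card (Fin (k + 1) ⊕ (Fin k × Fin 5)) = 6 * k + 1 ∧
    5 ^ k ≤ {U : Set (Fin (k + 1) ⊕ (Fin k × Fin 5)) |
      IsMinCVC (paperGraph k) U}.ncard := by
  refine ⟨paperGraph_connected k, by simp [Fintype.card_sum]; ring, ?_⟩
  set S : Set (Set (PV k)) := {U | IsMinCVC (paperGraph k) U} with hS
  have hmap : ∀ f : Fin k → Fin 5, cov k f ∈ S := fun f => cov_minCVC hk f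
  have hinj : Function.Injective (fun f : Fin k → Fin 5 => (⟨cov k f, hmap f⟩ : S)) :=
    fun f g h => cov_injective (congrArg Subtype.val h)
  have hle : Nat.card (Fin k → Fin 5) ≤ Nat.card S :=
    Nat.card_le_card_of_injective _ hinj
  rw [Nat.card_coe_set_eq] at hle
  calc 5 ^ k = Nat.card (Fin k → Fin 5) := by simp
    _ ≤ S.ncard := hle
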